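/- arXiv:2301.08117 — 4 statements merged into one kernel-verified Lean document; each statement's English description precedes it below -/
import Mathlib

section
/- Let U be a subset of a finite-dimensional inner product space Θ, let L : U → ℝ≥0 be differentiable, and suppose there exist μ > 0 and a strictly increasing differentiable φ : (0,∞) → ℝ such that for all θ ∈ U with L(θ) ≠ 0, φ'(L(θ)) · ‖∇L(θ)‖² ≥ μ. Then any gradient flow θ : ℝ≥0 → U of L with L(θ₀) ≠ 0 satisfies L(θ_t) ≤ φ⁻¹(φ(L(θ₀)) − μt) for all t ≥ 0 such that φ(L(θ₀)) − μt lies in the range of φ. -/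
/-!
Along the flow `(L ∘ θ)' = -‖∇L‖²`, so `L ∘ θ` is nonincreasing; if `L (θ t) > 0` it therefore
stays positive on `[0, t]`, where `(φ ∘ L ∘ θ)' = -φ'(L) ‖∇L‖² ≤ -μ`. The mean value inequality
gives `φ (L (θ t)) ≤ φ (L (θ 0)) - μ t = φ u`, and strict monotonicity of `φ` inverts this.
-/

open Set

theorem HasGradientAt.comp_hasDerivAt {F : Type*} [NormedAddCommGroup F] [InnerProductSpace ℝ F]
    [CompleteSpace F] {f : F → ℝ} {f' : F} {γ : ℝ → F} {v : F} {t : ℝ}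
    (hf : HasGradientAt f f' (γ t)) (hγ : HasDerivAt γ v t) :
    HasDerivAt (f ∘ γ) (inner ℝ f' v) t := by
  simpa [InnerProductSpace.toDual_apply_apply] using hf.hasFDerivAt.comp_hasDerivAt t hγ

theorem hasDerivAt_comp_of_hasDerivAt_neg_gradient {F : Type*} [NormedAddCommGroup F]
    [InnerProductSpace ℝ F] [CompleteSpace F] {f : F → ℝ} {γ : ℝ → F} {t : ℝ}
    (hf : DifferentiableAt ℝ f (γ t)) (hγ : HasDerivAt γ (-gradient f (γ t)) t) :
    HasDerivAt (f ∘ γ) (-‖gradient f (γ t)‖ ^ 2) t := by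
  simpa [inner_neg_right, real_inner_self_eq_norm_sq] using hf.hasGradientAt.comp_hasDerivAt hγ

theorem Convex.image_sub_le_mul_sub_of_hasDerivAt_le {D : Set ℝ} (hD : Convex ℝ D)
    {f f' : ℝ → ℝ} (hf : ∀ x ∈ D, HasDerivAt f (f' x) x) {C : ℝ}
    (hf'C : ∀ x ∈ interior D, f' x ≤ C) {x y : ℝ} (hx : x ∈ D) (hy : y ∈ D) (hxy : x ≤ y) :
    f y - f x ≤ C * (y - x) :=
  hD.image_sub_le_mul_sub_of_deriv_le (fun z hz => (hf z hz).continuousAt.continuousWithinAt)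
    (fun z hz => (hf z (interior_subset hz)).differentiableAt.differentiableWithinAt)
    (fun z hz => (hf z (interior_subset hz)).deriv ▸ hf'C z hz) x hx y hy hxy

theorem stmt0_general {Θ : Type*} [NormedAddCommGroup Θ] [InnerProductSpace ℝ Θ]
    [FiniteDimensional ℝ Θ]
    (U : Set Θ) (L : Θ → ℝ)
    (hLdiff : ∀ θ ∈ U, DifferentiableAt ℝ L θ)
    (μ : ℝ)
    (φ : ℝ → ℝ) (hφmono : StrictMonoOn φ (Set.Ioi (0:ℝ)))
    (hφdiff : ∀ u : ℝ, 0 < u → DifferentiableAt ℝ φ u)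
    (hKL : ∀ θ ∈ U, L θ ≠ 0 → μ ≤ deriv φ (L θ) * ‖gradient L θ‖ ^ 2)
    (θ : ℝ → Θ)
    (hflow : ∀ t : ℝ, 0 ≤ t → HasDerivAt θ (-(gradient L (θ t))) t)
    (hmem : ∀ t : ℝ, 0 ≤ t → θ t ∈ U) :
    ∀ t : ℝ, 0 ≤ t → ∀ u : ℝ, 0 < u → φ u = φ (L (θ 0)) - μ * t →
      L (θ t) ≤ u := by
  intro t ht u hu hφu
  obtain hnonpos | hpos := le_or_gt (L (θ t)) 0
  · linarith
  have hdecay : ∀ s ∈ Ici (0 : ℝ), HasDerivAt (L ∘ θ) (-‖gradient L (θ s)‖ ^ 2) s :=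
    fun s hs => hasDerivAt_comp_of_hasDerivAt_neg_gradient (hLdiff _ (hmem s hs)) (hflow s hs)
  have hpos_before : ∀ s ∈ Icc 0 t, 0 < L (θ s) := by
    intro s hs
    have hanti := (convex_Ici 0).image_sub_le_mul_sub_of_hasDerivAt_le hdecay (C := 0)
      (fun r _ => neg_nonpos.2 (by positivity)) hs.1 ht hs.2
    simp only [Function.comp_apply, zero_mul] at hanti
    linarith
  have hlyap : φ (L (θ t)) - φ (L (θ 0)) ≤ -μ * (t - 0) :=
    (convex_Icc 0 t).image_sub_le_mul_sub_of_hasDerivAt_le (f := φ ∘ L ∘ θ)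
      (fun s hs => (hφdiff _ (hpos_before s hs)).hasDerivAt.comp s (hdecay s hs.1))
      (fun s hs => by
        have hs' := interior_subset hs
        have := hKL _ (hmem s hs'.1) (hpos_before s hs').ne'
        linarith)
      (left_mem_Icc.2 ht) (right_mem_Icc.2 ht) ht
  exact (hφmono.le_iff_le hpos hu).1 (by linarith)

/-- Kurdyka–Łojasiewicz convergence: if `φ' (L θ) * ‖∇L θ‖² ≥ μ` on `U` away from zero loss,
then along any gradient flow staying in `U` with nonzero initial loss,
`L (θ t) ≤ φ⁻¹ (φ (L (θ 0)) - μ t)` whenever the latter value is in the range of `φ`. -/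
theorem stmt0 {Θ : Type*} [NormedAddCommGroup Θ] [InnerProductSpace ℝ Θ]
    [FiniteDimensional ℝ Θ]
    (U : Set Θ) (L : Θ → ℝ) (hLnonneg : ∀ θ ∈ U, 0 ≤ L θ)
    (hLdiff : ∀ θ ∈ U, DifferentiableAt ℝ L θ)
    (μ : ℝ) (hμ : 0 < μ)
    (φ : ℝ → ℝ) (hφmono : StrictMonoOn φ (Set.Ioi (0:ℝ)))
    (hφdiff : ∀ u : ℝ, 0 < u → DifferentiableAt ℝ φ u)
    (hKL : ∀ θ ∈ U, L θ ≠ 0 → μ ≤ deriv φ (L θ) * ‖gradient L θ‖ ^ 2)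
    (θ : ℝ → Θ)
    (hflow : ∀ t : ℝ, 0 ≤ t → HasDerivAt θ (-(gradient L (θ t))) t)
    (hmem : ∀ t : ℝ, 0 ≤ t → θ t ∈ U)
    (hinit : L (θ 0) ≠ 0) :
    ∀ t : ℝ, 0 ≤ t → ∀ u : ℝ, 0 < u → φ u = φ (L (θ 0)) - μ * t →
      L (θ t) ≤ u :=
  stmt0_general U L hLdiff μ φ hφmono hφdiff hKL θ hflow hmem
end

section
/- Let (V,⟨·,·⟩) be an inner product space and let a, b : [0,1] → V be integrable maps. Suppose there exists α ∈ [0,1] such that for all s,t,u,v ∈ [0,1], ⟨a(s),b(u)⟩·⟨a(t),b(v)⟩ ≤ α² · ⟨a(s),a(t)⟩·⟨b(u),b(v)⟩. Then |⟨∫₀¹ a(s) ds, ∫₀¹ b(t) dt⟩| ≤ α · ‖∫₀¹ a(s) ds‖ · ‖∫₀¹ b(t) dt‖. -/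
/-!
The defect `α² ⟪x, y⟫ ⟪z, w⟫ - ⟪x, z⟫ ⟪y, w⟫` is linear in each of its four
arguments, so its nonnegativity passes from the values of `a` and `b` to their
integrals, one argument at a time. Once all four arguments are integrated it reads
`⟪∫ a, ∫ b⟫² ≤ α² ‖∫ a‖² ‖∫ b‖²`.
-/

open MeasureTheory
open scoped RealInnerProductSpace

section CrossDefect

variable {V : Type*} [NormedAddCommGroup V] [InnerProductSpace ℝ V]

def crossDefect (α : ℝ) (x y z w : V) : ℝ :=
  α ^ 2 * (⟪x, y⟫ * ⟪z, w⟫) - ⟪x, z⟫ * ⟪y, w⟫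

theorem crossDefect_eq_inner_left (α : ℝ) (x y z w : V) :
    crossDefect α x y z w = ⟪x, (α ^ 2 * ⟪z, w⟫) • y - ⟪y, w⟫ • z⟫ := by
  simp only [crossDefect, inner_sub_right, real_inner_smul_right]
  ring

theorem crossDefect_swap (α : ℝ) (x y z w : V) :
    crossDefect α x y z w = crossDefect α y x w z := by
  simp only [crossDefect, real_inner_comm x y, real_inner_comm z w]
  ring

theorem crossDefect_comm (α : ℝ) (x y z w : V) :
    crossDefect α x y z w = crossDefect α z w x y := by
  simp only [crossDefect, real_inner_comm x z, real_inner_comm y w]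
  ring

theorem crossDefect_self_self (α : ℝ) (x z : V) :
    crossDefect α x x z z = α ^ 2 * (‖x‖ ^ 2 * ‖z‖ ^ 2) - ⟪x, z⟫ ^ 2 := by
  simp only [crossDefect, real_inner_self_eq_norm_sq]
  ring

variable [CompleteSpace V] {X : Type*} [MeasurableSpace X] {μ : Measure X} {S : Set X}

theorem crossDefect_integral_left_nonneg {f : X → V} (hf : Integrable f μ)
    (hS : ∀ᵐ s ∂μ, s ∈ S) {α : ℝ} {y z w : V}
    (h : ∀ s ∈ S, 0 ≤ crossDefect α (f s) y z w) :
    0 ≤ crossDefect α (∫ s, f s ∂μ) y z w := by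
  rw [crossDefect_eq_inner_left, real_inner_comm, ← integral_inner hf]
  refine integral_nonneg_of_ae (hS.mono fun s hs => ?_)
  have hs := h s hs
  rw [crossDefect_eq_inner_left, real_inner_comm] at hs
  exact hs

theorem abs_inner_integral_le_of_crossDefect_nonneg {a b : X → V}
    (ha : Integrable a μ) (hb : Integrable b μ) (hS : ∀ᵐ s ∂μ, s ∈ S)
    {α : ℝ} (hα : 0 ≤ α)
    (hcross : ∀ s ∈ S, ∀ t ∈ S, ∀ u ∈ S, ∀ v ∈ S,
      0 ≤ crossDefect α (a s) (a t) (b u) (b v)) :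
    |⟪∫ s, a s ∂μ, ∫ s, b s ∂μ⟫| ≤
      α * ‖∫ s, a s ∂μ‖ * ‖∫ s, b s ∂μ‖ := by
  set A := ∫ s, a s ∂μ
  set B := ∫ s, b s ∂μ
  -- The Klein four-group of symmetries of `crossDefect` brings each argument to the front.
  have h₁ : ∀ t ∈ S, ∀ u ∈ S, ∀ v ∈ S, 0 ≤ crossDefect α A (a t) (b u) (b v) :=
    fun t ht u hu v hv =>
      crossDefect_integral_left_nonneg ha hS fun s hs => hcross s hs t ht u hu v hv
  have h₂ : ∀ u ∈ S, ∀ v ∈ S, 0 ≤ crossDefect α A A (b u) (b v) := fun u hu v hv => by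
    rw [crossDefect_swap]
    exact crossDefect_integral_left_nonneg ha hS fun t ht => by
      rw [crossDefect_swap]; exact h₁ t ht u hu v hv
  have h₃ : ∀ v ∈ S, 0 ≤ crossDefect α A A B (b v) := fun v hv => by
    rw [crossDefect_comm]
    exact crossDefect_integral_left_nonneg hb hS fun u hu => by
      rw [crossDefect_comm]; exact h₂ u hu v hv
  have h₄ : 0 ≤ crossDefect α A A B B := by
    rw [crossDefect_comm, crossDefect_swap]
    exact crossDefect_integral_left_nonneg hb hS fun v hv => by
      rw [crossDefect_swap, crossDefect_comm]; exact h₃ v hv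
  rw [crossDefect_self_self, sub_nonneg] at h₄
  have hsq : ⟪A, B⟫ ^ 2 ≤ (α * ‖A‖ * ‖B‖) ^ 2 := by linarith
  simpa only [abs_of_nonneg (by positivity : 0 ≤ α * ‖A‖ * ‖B‖)] using sq_le_sq.mp hsq

end CrossDefect

theorem stmt6_general {V : Type*} [NormedAddCommGroup V] [InnerProductSpace ℝ V]
    [CompleteSpace V]
    (a b : ℝ → V)
    (ha : IntervalIntegrable a MeasureTheory.volume 0 1)
    (hb : IntervalIntegrable b MeasureTheory.volume 0 1)
    (α : ℝ) (hα0 : 0 ≤ α)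
    (hcross : ∀ s ∈ Set.Icc (0:ℝ) 1, ∀ t ∈ Set.Icc (0:ℝ) 1,
      ∀ u ∈ Set.Icc (0:ℝ) 1, ∀ v ∈ Set.Icc (0:ℝ) 1,
      (inner ℝ (a s) (b u) : ℝ) * (inner ℝ (a t) (b v) : ℝ) ≤
        α ^ 2 * ((inner ℝ (a s) (a t) : ℝ) * (inner ℝ (b u) (b v) : ℝ))) :
    |(inner ℝ (∫ s in (0:ℝ)..1, a s) (∫ t in (0:ℝ)..1, b t) : ℝ)| ≤
      α * ‖∫ s in (0:ℝ)..1, a s‖ * ‖∫ t in (0:ℝ)..1, b t‖ := by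
  rw [intervalIntegral.integral_of_le zero_le_one, intervalIntegral.integral_of_le zero_le_one]
  have hS : ∀ᵐ s ∂volume.restrict (Set.Ioc (0:ℝ) 1), s ∈ Set.Icc (0:ℝ) 1 :=
    (ae_restrict_mem measurableSet_Ioc).mono fun _ hs => Set.Ioc_subset_Icc_self hs
  exact abs_inner_integral_le_of_crossDefect_nonneg ha.1 hb.1 hS hα0
    fun s hs t ht u hu v hv => sub_nonneg.mpr (hcross s hs t ht u hu v hv)

/-- Cosine bound by cross-ratio control: if for all `s,t,u,v ∈ [0,1]`,
`⟨a s, b u⟩ ⟨a t, b v⟩ ≤ α² ⟨a s, a t⟩ ⟨b u, b v⟩`,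
then `|⟨∫ a, ∫ b⟩| ≤ α ‖∫ a‖ ‖∫ b‖`. -/
theorem stmt6 {V : Type*} [NormedAddCommGroup V] [InnerProductSpace ℝ V]
    [CompleteSpace V]
    (a b : ℝ → V)
    (ha : IntervalIntegrable a MeasureTheory.volume 0 1)
    (hb : IntervalIntegrable b MeasureTheory.volume 0 1)
    (α : ℝ) (hα0 : 0 ≤ α) (hα1 : α ≤ 1)
    (hcross : ∀ s ∈ Set.Icc (0:ℝ) 1, ∀ t ∈ Set.Icc (0:ℝ) 1,
      ∀ u ∈ Set.Icc (0:ℝ) 1, ∀ v ∈ Set.Icc (0:ℝ) 1,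
      (inner ℝ (a s) (b u) : ℝ) * (inner ℝ (a t) (b v) : ℝ) ≤
        α ^ 2 * ((inner ℝ (a s) (a t) : ℝ) * (inner ℝ (b u) (b v) : ℝ))) :
    |(inner ℝ (∫ s in (0:ℝ)..1, a s) (∫ t in (0:ℝ)..1, b t) : ℝ)| ≤
      α * ‖∫ s in (0:ℝ)..1, a s‖ * ‖∫ t in (0:ℝ)..1, b t‖ :=
  stmt6_general a b ha hb α hα0 hcross
end

section
/- For all x ∈ ℝ, |sinc'(x)| ≤ 1/2, where sinc(x) = sin(x)/x (with sinc(0)=1) and sinc'(x) = cos(x)/x − sin(x)/x² for x ≠ 0, sinc'(0) = 0. -/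
/-- The cardinal sine `sinc x = sin x / x`, extended by `sinc 0 = 1`. -/
noncomputable def sinc (x : ℝ) : ℝ := if x = 0 then 1 else Real.sin x / x

/-! Since `sinc` is even, `sinc'` is odd and vanishes at `0`, so it suffices to treat `x > 0`,
where `sinc' x = (x cos x - sin x) / x²`. The functions `x²/2 ∓ (x cos x - sin x)` vanish at `0`
and have derivatives `x (1 ± sin x) ≥ 0` on `[0, ∞)`, whence `|x cos x - sin x| ≤ x²/2`. -/

lemma le_of_hasDerivAt_of_nonneg {f f' : ℝ → ℝ} (hf : ∀ x, HasDerivAt f (f' x) x)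
    (hf' : ∀ x, 0 ≤ x → 0 ≤ f' x) {x : ℝ} (hx : 0 ≤ x) : f 0 ≤ f x := by
  have hf_cont : Continuous f := continuous_iff_continuousAt.2 fun y => (hf y).continuousAt
  refine monotoneOn_of_hasDerivWithinAt_nonneg (convex_Ici 0) hf_cont.continuousOn
    (fun y _ => (hf y).hasDerivWithinAt) (fun y hy => hf' y ?_) Set.self_mem_Ici hx hx
  rw [interior_Ici] at hy
  exact hy.le

section

open Real

lemma mul_cos_sub_sin_le {x : ℝ} (hx : 0 ≤ x) : x * cos x - sin x ≤ x ^ 2 / 2 := by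
  have hρ : ∀ y, HasDerivAt (fun y => y ^ 2 / 2 - y * cos y + sin y) (y * (1 + sin y)) y := by
    intro y
    refine ((((hasDerivAt_pow 2 y).div_const 2).sub
      ((hasDerivAt_id y).mul (hasDerivAt_cos y))).add (hasDerivAt_sin y)).congr_deriv ?_
    simp only [id]
    ring
  have hρ_mono := le_of_hasDerivAt_of_nonneg hρ
    (fun y hy => mul_nonneg hy (by linarith [neg_one_le_sin y])) hx
  linarith [sin_zero]

lemma neg_sq_div_two_le_mul_cos_sub_sin {x : ℝ} (hx : 0 ≤ x) :
    -(x ^ 2 / 2) ≤ x * cos x - sin x := by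
  have hτ : ∀ y, HasDerivAt (fun y => y ^ 2 / 2 + y * cos y - sin y) (y * (1 - sin y)) y := by
    intro y
    refine ((((hasDerivAt_pow 2 y).div_const 2).add
      ((hasDerivAt_id y).mul (hasDerivAt_cos y))).sub (hasDerivAt_sin y)).congr_deriv ?_
    simp only [id]
    ring
  have hτ_mono := le_of_hasDerivAt_of_nonneg hτ
    (fun y hy => mul_nonneg hy (by linarith [sin_le_one y])) hx
  linarith [sin_zero]

end

lemma sinc_neg (x : ℝ) : sinc (-x) = sinc x :=
  Real.sinc_neg x

lemma deriv_sinc_neg (x : ℝ) : deriv sinc (-x) = -deriv sinc x := by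
  have h := deriv_comp_neg (f := sinc) (x := x)
  rw [show (fun y => sinc (-y)) = sinc from funext sinc_neg] at h
  linarith

lemma deriv_sinc_zero : deriv sinc 0 = 0 := by
  have h := deriv_sinc_neg 0
  rw [neg_zero] at h
  linarith

lemma hasDerivAt_sinc {x : ℝ} (hx : x ≠ 0) :
    HasDerivAt sinc ((x * Real.cos x - Real.sin x) / x ^ 2) x := by
  have h_eq : (fun y => Real.sin y / y) =ᶠ[nhds x] sinc := by
    filter_upwards [isOpen_ne.mem_nhds hx] with y hy
    simp [sinc, hy]
  refine (((Real.hasDerivAt_sin x).div (hasDerivAt_id x) hx).congr_of_eventuallyEq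
    h_eq.symm).congr_deriv ?_
  simp only [id]
  ring

/-- For all `x`, `|sinc' x| ≤ 1/2`. -/
theorem stmt12 : ∀ x : ℝ, |deriv sinc x| ≤ 1 / 2 := by
  suffices h_pos : ∀ x, 0 < x → |deriv sinc x| ≤ 1 / 2 by
    intro x
    rcases lt_trichotomy x 0 with hx | rfl | hx
    · simpa [deriv_sinc_neg] using h_pos (-x) (neg_pos.2 hx)
    · simp [deriv_sinc_zero]
    · exact h_pos x hx
  intro x hx
  have hx2 : 0 < x ^ 2 := by positivity
  rw [(hasDerivAt_sinc hx.ne').deriv, abs_le, le_div_iff₀ hx2, div_le_iff₀ hx2]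
  constructor
  · linarith [neg_sq_div_two_le_mul_cos_sub_sin hx.le]
  · linarith [mul_cos_sub_sin_le hx.le]
end

section
/- Let Θ be a finite-dimensional inner product space, θ₀ ∈ Θ, ε > 0, c > 0, and let L : Θ → ℝ≥0 be continuously differentiable with L(θ₀) > ε. Suppose the gradient flow θ : ℝ≥0 → Θ of L satisfies, for all t in an interval [0,T) on which L(θ_t) ≥ ε, the inequality ‖∇L(θ_t)‖ ≥ (L(θ_t) − ε)/(r_t + c), where r_t = ∫₀ᵗ ‖∂_s θ_s‖ ds. Then for all t ∈ [0,T), r_t + c ≤ c · (L(θ₀) − ε)/(L(θ_t) − ε). -/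
/-!
Along the flow, `ℓ = L(θ) - ε` decreases at rate `‖∇L(θ)‖²` while the path length `r` grows at
rate `‖∇L(θ)‖`. The hypothesis `ℓ ≤ ‖∇L(θ)‖ (r + c)` makes the derivative
`-‖∇L‖² (r + c) + ℓ ‖∇L‖` of `ℓ (r + c)` nonpositive, so `ℓ (r + c)` is antitone, and comparing its
values at `0` (where `r = 0`) and at `t` gives the bound.
-/

open Set MeasureTheory intervalIntegral

theorem antitoneOn_mul_of_hasDerivAt_neg_sq {a b : ℝ} {ℓ ρ g : ℝ → ℝ}
    (hℓc : ContinuousOn ℓ (Icc a b)) (hρc : ContinuousOn ρ (Icc a b))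
    (hℓ : ∀ u ∈ Ioo a b, HasDerivAt ℓ (-g u ^ 2) u) (hρ : ∀ u ∈ Ioo a b, HasDerivAt ρ (g u) u)
    (hg : ∀ u ∈ Ioo a b, 0 ≤ g u) (hle : ∀ u ∈ Ioo a b, ℓ u ≤ g u * ρ u) :
    AntitoneOn (fun v => ℓ v * ρ v) (Icc a b) := by
  have hderiv : ∀ u ∈ Ioo a b, HasDerivAt (fun v => ℓ v * ρ v) (-g u ^ 2 * ρ u + ℓ u * g u) u :=
    fun u hu => (hℓ u hu).mul (hρ u hu)
  refine antitoneOn_of_deriv_nonpos (convex_Icc a b) (hℓc.mul hρc) ?_ ?_ <;>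
    rw [interior_Icc] <;> intro u hu
  · exact (hderiv u hu).differentiableAt.differentiableWithinAt
  · rw [(hderiv u hu).deriv]
    nlinarith [mul_le_mul_of_nonneg_left (hle u hu) (hg u hu)]

theorem hasDerivAt_integral_of_continuousOn_Ici {φ : ℝ → ℝ} {a u : ℝ}
    (hφ : ContinuousOn φ (Ici a)) (hu : a < u) :
    HasDerivAt (fun v => ∫ s in a..v, φ s) (φ u) u :=
  integral_hasDerivAt_right
    ((hφ.mono (by simpa [uIcc_of_le hu.le] using Icc_subset_Ici_self)).intervalIntegrable)
    (hφ.stronglyMeasurableAtFilter_nhdsWithin measurableSet_Ici u |>.filter_mono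
      (by rw [nhdsWithin_eq_nhds.mpr (Ici_mem_nhds hu)]))
    ((hφ u hu.le).continuousAt (Ici_mem_nhds hu))

theorem continuousOn_primitive_Icc {φ : ℝ → ℝ} {a b : ℝ} (hφ : ContinuousOn φ (Icc a b))
    (hab : a ≤ b) : ContinuousOn (fun v => ∫ s in a..v, φ s) (Icc a b) := by
  rw [← uIcc_of_le hab] at hφ ⊢
  exact continuousOn_primitive_interval hφ.integrableOn_uIcc

section GradientFlow

variable {E : Type*} [NormedAddCommGroup E] [InnerProductSpace ℝ E] [CompleteSpace E]
  {L : E → ℝ} {θ : ℝ → E}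

theorem hasDerivAt_comp_of_hasDerivAt_neg_gradient_s17 {t : ℝ} (hL : DifferentiableAt ℝ L (θ t))
    (hθ : HasDerivAt θ (-gradient L (θ t)) t) :
    HasDerivAt (fun s => L (θ s)) (-‖gradient L (θ t)‖ ^ 2) t := by
  have h := hL.hasGradientAt.hasFDerivAt.comp_hasDerivAt t hθ
  rwa [InnerProductSpace.toDual_apply_apply, inner_neg_right, real_inner_self_eq_norm_sq] at h

theorem ContDiff.continuous_gradient (hL : ContDiff ℝ 1 L) : Continuous (gradient L) :=
  (InnerProductSpace.toDual ℝ E).symm.continuous.comp (hL.continuous_fderiv one_ne_zero)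

theorem continuousOn_deriv_of_gradient_flow (hL : ContDiff ℝ 1 L) {s : Set ℝ}
    (hflow : ∀ t ∈ s, HasDerivAt θ (-gradient L (θ t)) t) : ContinuousOn (deriv θ) s := by
  have hθ : ContinuousOn θ s := fun t ht => (hflow t ht).continuousAt.continuousWithinAt
  exact (hL.continuous_gradient.comp_continuousOn hθ).neg.congr fun t ht => (hflow t ht).deriv

theorem antitoneOn_loss_mul_pathLength_add (hL : ContDiff ℝ 1 L)
    (hflow : ∀ t ∈ Ici 0, HasDerivAt θ (-gradient L (θ t)) t) {ε c t : ℝ} (ht : 0 ≤ t)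
    (hle : ∀ u ∈ Ioo 0 t,
      L (θ u) - ε ≤ ‖gradient L (θ u)‖ * ((∫ s in (0:ℝ)..u, ‖deriv θ s‖) + c)) :
    AntitoneOn (fun v => (L (θ v) - ε) * ((∫ s in (0:ℝ)..v, ‖deriv θ s‖) + c)) (Icc 0 t) := by
  have hspeed : ContinuousOn (fun s => ‖deriv θ s‖) (Ici 0) :=
    (continuousOn_deriv_of_gradient_flow hL hflow).norm
  have hnorm : ∀ u ∈ Ici (0:ℝ), ‖gradient L (θ u)‖ = ‖deriv θ u‖ := fun u hu => by
    rw [(hflow u hu).deriv, norm_neg]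
  have hθ : ContinuousOn θ (Icc 0 t) := fun u hu =>
    (hflow u hu.1).continuousAt.continuousWithinAt
  refine antitoneOn_mul_of_hasDerivAt_neg_sq (g := fun v => ‖deriv θ v‖)
    ((hL.continuous.comp_continuousOn hθ).sub continuousOn_const)
    ((continuousOn_primitive_Icc (hspeed.mono Icc_subset_Ici_self) ht).add continuousOn_const)
    (fun u hu => ?_) (fun u hu => (hasDerivAt_integral_of_continuousOn_Ici hspeed hu.1).add_const c)
    (fun u _ => norm_nonneg _) (fun u hu => hnorm u (mem_Ici.2 hu.1.le) ▸ hle u hu)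
  rw [← hnorm u (mem_Ici.2 hu.1.le)]
  exact (hasDerivAt_comp_of_hasDerivAt_neg_gradient_s17
    (hL.differentiable one_ne_zero _) (hflow u hu.1.le)).sub_const ε

end GradientFlow

theorem stmt17_general {Θ : Type*} [NormedAddCommGroup Θ] [InnerProductSpace ℝ Θ]
    [FiniteDimensional ℝ Θ]
    (L : Θ → ℝ) (hL : ContDiff ℝ 1 L)
    (ε c : ℝ) (hc : 0 < c)
    (θ : ℝ → Θ) (T : ℝ)
    (hflow : ∀ t : ℝ, 0 ≤ t → HasDerivAt θ (-(gradient L (θ t))) t)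
    (hKL : ∀ t : ℝ, 0 ≤ t → t < T →
      (L (θ t) - ε) / ((∫ s in (0:ℝ)..t, ‖deriv θ s‖) + c) ≤ ‖gradient L (θ t)‖) :
    ∀ t : ℝ, 0 ≤ t → t < T →
      (L (θ t) - ε) * ((∫ s in (0:ℝ)..t, ‖deriv θ s‖) + c) ≤ c * (L (θ 0) - ε) := by
  intro t ht htT
  have hanti := antitoneOn_loss_mul_pathLength_add hL hflow ht (ε := ε) (c := c) fun u hu => by
    have hlength : 0 < (∫ s in (0:ℝ)..u, ‖deriv θ s‖) + c :=
      add_pos_of_nonneg_of_pos (integral_nonneg hu.1.le fun s _ => norm_nonneg _) hc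
    exact (div_le_iff₀ hlength).1 (hKL u hu.1.le (hu.2.trans htT))
  simpa [mul_comm c] using hanti ⟨le_rfl, ht⟩ ⟨ht, le_rfl⟩ ht

/-- Radius–loss bound: along a gradient flow of `L`, if on `[0,T)` the loss stays above `ε`
and `‖∇L(θ t)‖ ≥ (L(θ t) - ε)/(r t + c)` where `r t = ∫₀ᵗ ‖∂ₛθ‖`, then
`(L(θ t) - ε) (r t + c) ≤ c (L(θ 0) - ε)` (i.e. `r t + c ≤ c (L(θ 0)-ε)/(L(θ t)-ε)`). -/
theorem stmt17 {Θ : Type*} [NormedAddCommGroup Θ] [InnerProductSpace ℝ Θ]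
    [FiniteDimensional ℝ Θ]
    (L : Θ → ℝ) (hL : ContDiff ℝ 1 L) (hLnonneg : ∀ θ, 0 ≤ L θ)
    (ε c : ℝ) (hε : 0 < ε) (hc : 0 < c)
    (θ : ℝ → Θ) (T : ℝ) (hT : 0 < T)
    (hflow : ∀ t : ℝ, 0 ≤ t → HasDerivAt θ (-(gradient L (θ t))) t)
    (hinit : ε < L (θ 0))
    (hge : ∀ t : ℝ, 0 ≤ t → t < T → ε ≤ L (θ t))
    (hKL : ∀ t : ℝ, 0 ≤ t → t < T →
      (L (θ t) - ε) / ((∫ s in (0:ℝ)..t, ‖deriv θ s‖) + c) ≤ ‖gradient L (θ t)‖) :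
    ∀ t : ℝ, 0 ≤ t → t < T →
      (L (θ t) - ε) * ((∫ s in (0:ℝ)..t, ‖deriv θ s‖) + c) ≤ c * (L (θ 0) - ε) :=
  stmt17_general L hL ε c hc θ T hflow hKL
end
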